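/- For all LDQL queries q1 and q2 and every variable ?v, the queries (SEED ?v (q1 UNION q2)) and ((SEED ?v q1) UNION (SEED ?v q2)) are semantically equivalent, i.e., their S-based evaluations coincide for every Web of Linked Data W and every finite set S of URIs. -/
import Mathlib


namespace LDQLFormal

noncomputable section
open Classical

/-! ### Basic RDF model -/

abbrev URI := ℕ
abbrev BNodeId := ℕ
abbrev LitId := ℕ
abbrev Var := ℕ
abbrev Doc := ℕ

/-- Subject terms: URIs or blank nodes. -/
inductive Subj where
  | uri (u : URI)
  | bnode (b : BNodeId)
deriving DecidableEq

/-- RDF terms (objects): URIs, blank nodes, or literals. -/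
inductive Obj where
  | uri (u : URI)
  | bnode (b : BNodeId)
  | lit (l : LitId)
deriving DecidableEq

structure RDFTriple where
  s : Subj
  p : URI
  o : Obj
deriving DecidableEq

def Subj.toObj : Subj → Obj
  | .uri u => .uri u
  | .bnode b => .bnode b

/-- The set of URIs occurring in an RDF triple. -/
def urisOf (t : RDFTriple) : Set URI :=
  {u | t.s = .uri u ∨ t.p = u ∨ t.o = .uri u}

/-- A Web of Linked Data: a finite set of documents, the data in each
document (a finite set of RDF triples), and a surjective partial function
`adoc` from URIs to documents. -/
structure Web where
  docs : Set Doc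
  finite_docs : docs.Finite
  data : Doc → Finset RDFTriple
  adoc : URI → Option Doc
  adoc_mem : ∀ u d, adoc u = some d → d ∈ docs
  adoc_surj : ∀ d ∈ docs, ∃ u, adoc u = some d

/-- Link graph edge `(d, (t,u), d')`. -/
def Web.edge (W : Web) (d : Doc) (t : RDFTriple) (u : URI) (d' : Doc) : Prop :=
  d ∈ W.docs ∧ t ∈ W.data d ∧ u ∈ urisOf t ∧ W.adoc u = some d'

/-! ### Link patterns -/

/-- Components of a link pattern drawn from `U ∪ {*, +}`. -/
inductive LPUP where
  | uri (u : URI)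
  | star
  | plus
deriving DecidableEq

/-- Components of a link pattern drawn from `U ∪ Lit ∪ {*, +}`. -/
inductive LPULP where
  | uri (u : URI)
  | lit (l : LitId)
  | star
  | plus
deriving DecidableEq

structure LinkPattern where
  c1 : LPUP
  c2 : LPUP
  c3 : LPULP

def matchSubj (y : LPUP) (uctx : URI) (x : Subj) : Prop :=
  match y with
  | .uri w => x = .uri w
  | .star => True
  | .plus => x = .uri uctx

def matchPred (y : LPUP) (uctx : URI) (x : URI) : Prop :=
  match y with
  | .uri w => x = w
  | .star => True
  | .plus => x = uctx

def matchObj (y : LPULP) (uctx : URI) (x : Obj) : Prop :=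
  match y with
  | .uri w => x = .uri w
  | .lit l => x = .lit l
  | .star => True
  | .plus => x = .uri uctx

/-- An edge with label `(t,u)` matches a link pattern in the context of `uctx`. -/
def lpMatch (lp : LinkPattern) (uctx : URI) (t : RDFTriple) (u : URI) : Prop :=
  ((lp.c1 = .star ∧ t.s = .uri u) ∨ (lp.c2 = .star ∧ t.p = u) ∨ (lp.c3 = .star ∧ t.o = .uri u))
  ∧ matchSubj lp.c1 uctx t.s ∧ matchPred lp.c2 uctx t.p ∧ matchObj lp.c3 uctx t.o

/-! ### Solution mappings -/

abbrev Mapping := Var → Option Obj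

def mdom (μ : Mapping) : Set Var := {v | μ v ≠ none}

def emptyMap : Mapping := fun _ => none

def single (v : Var) (o : Obj) : Mapping := fun w => if w = v then some o else none

def compatible (μ1 μ2 : Mapping) : Prop :=
  ∀ v a b, μ1 v = some a → μ2 v = some b → a = b

def munion (μ1 μ2 : Mapping) : Mapping := fun v =>
  match μ1 v with
  | some a => some a
  | none => μ2 v

/-- Join of two sets of solution mappings. -/
def mjoin (Ω1 Ω2 : Set Mapping) : Set Mapping :=
  {μ | ∃ μ1 ∈ Ω1, ∃ μ2 ∈ Ω2, compatible μ1 μ2 ∧ μ = munion μ1 μ2}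

/-- Restriction of a mapping to a finite set of variables. -/
def restrictV (V : Finset Var) (μ : Mapping) : Mapping := fun v =>
  if v ∈ V then μ v else none

/-! ### SPARQL graph patterns -/

inductive PTerm where
  | var (v : Var)
  | term (o : Obj)
deriving DecidableEq

structure TriplePattern where
  sj : PTerm
  pr : PTerm
  ob : PTerm
deriving DecidableEq

def PTerm.varsOf : PTerm → Set Var
  | .var v => {v}
  | .term _ => ∅

def TriplePattern.varsOf (t : TriplePattern) : Set Var :=
  t.sj.varsOf ∪ t.pr.varsOf ∪ t.ob.varsOf

def pval (μ : Mapping) : PTerm → Option Obj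
  | .var v => μ v
  | .term o => some o

def objToSubj : Obj → Option Subj
  | .uri u => some (.uri u)
  | .bnode b => some (.bnode b)
  | .lit _ => none

def objToURI : Obj → Option URI
  | .uri u => some u
  | _ => none

/-- `tpInst μ tp = some t` iff `μ[tp] = t` (all variables of `tp` bound by `μ`
and the instantiation is a well-formed RDF triple). -/
def tpInst (μ : Mapping) (t : TriplePattern) : Option RDFTriple := do
  let s ← pval μ t.sj
  let s' ← objToSubj s
  let p ← pval μ t.pr
  let p' ← objToURI p
  let o ← pval μ t.ob
  return ⟨s', p', o⟩

/-- Filter conditions. -/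
inductive Cond where
  | eq (a b : PTerm)
  | neq (a b : PTerm)
  | and (c1 c2 : Cond)
  | or (c1 c2 : Cond)
  | not (c : Cond)

def condHolds (μ : Mapping) : Cond → Prop
  | .eq a b => ∃ x, pval μ a = some x ∧ pval μ b = some x
  | .neq a b => ∃ x y, pval μ a = some x ∧ pval μ b = some y ∧ x ≠ y
  | .and c1 c2 => condHolds μ c1 ∧ condHolds μ c2
  | .or c1 c2 => condHolds μ c1 ∨ condHolds μ c2
  | .not c => ¬ condHolds μ c

/-- SPARQL graph patterns, built from triple patterns with
AND, UNION, OPT, FILTER, GRAPH and BIND. -/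
inductive GP where
  | empty
  | tp (t : TriplePattern)
  | and (g1 g2 : GP)
  | union (g1 g2 : GP)
  | opt (g1 g2 : GP)
  | filter (g : GP) (c : Cond)
  | graphU (u : URI) (g : GP)
  | graphV (v : Var) (g : GP)
  | bind (g : GP) (o : Obj) (v : Var)

/-- An RDF dataset: a default graph together with named graphs. -/
structure RDFDataset where
  dflt : Set RDFTriple
  named : URI → Option (Set RDFTriple)

/-- Standard set-based SPARQL evaluation of a graph pattern over an RDF
dataset `D` with active graph `G`. -/
def evalGP (D : RDFDataset) : GP → Set RDFTriple → Set Mapping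
  | .empty, _ => {emptyMap}
  | .tp t, G => {μ | mdom μ = t.varsOf ∧ ∃ tr ∈ G, tpInst μ t = some tr}
  | .and g1 g2, G => mjoin (evalGP D g1 G) (evalGP D g2 G)
  | .union g1 g2, G => evalGP D g1 G ∪ evalGP D g2 G
  | .opt g1 g2, G =>
      mjoin (evalGP D g1 G) (evalGP D g2 G) ∪
        {μ | μ ∈ evalGP D g1 G ∧ ∀ μ2 ∈ evalGP D g2 G, ¬ compatible μ μ2}
  | .filter g c, G => {μ | μ ∈ evalGP D g G ∧ condHolds μ c}
  | .graphU u g, _ => {μ | ∃ G', D.named u = some G' ∧ μ ∈ evalGP D g G'}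
  | .graphV v g, _ =>
      {μ | ∃ u G', D.named u = some G' ∧ ∃ μ' ∈ evalGP D g G',
            compatible μ' (single v (.uri u)) ∧ μ = munion μ' (single v (.uri u))}
  | .bind g o v, G => {μ' | ∃ μ ∈ evalGP D g G, μ v = none ∧ μ' = munion μ (single v o)}

/-! ### LDQL syntax -/

mutual
/-- LDQL queries. -/
inductive LDQL where
  | base (l : LPE) (P : GP)
  | seedU (U0 : Finset URI) (q : LDQL)
  | seedV (v : Var) (q : LDQL)
  | qand (q1 q2 : LDQL)
  | qunion (q1 q2 : LDQL)
  | proj (V0 : Finset Var) (q : LDQL)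

/-- Link path expressions. -/
inductive LPE where
  | eps
  | pat (lp : LinkPattern)
  | seq (l1 l2 : LPE)
  | alt (l1 l2 : LPE)
  | star (l : LPE)
  | test (l : LPE)
  | sub (v : Var) (q : LDQL)
end

/-- `dataset_W(U0)`. -/
def datasetW (W : Web) (U0 : Set URI) : RDFDataset where
  dflt := {t | ∃ u ∈ U0, ∃ d, W.adoc u = some d ∧ t ∈ W.data d}
  named := fun u =>
    if u ∈ U0 then (W.adoc u).map (fun d => ((W.data d : Finset RDFTriple) : Set RDFTriple))
    else none

/-! ### LDQL semantics -/

mutual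
/-- The S-based evaluation `⟦q⟧_W^S` of an LDQL query. -/
def evalQ (W : Web) : LDQL → Set URI → Set Mapping
  | .base l P, S =>
      evalGP (datasetW W {u' | ∃ u ∈ S, u' ∈ evalL W l u}) P
        (datasetW W {u' | ∃ u ∈ S, u' ∈ evalL W l u}).dflt
  | .seedU U0 q, _ => evalQ W q ↑U0
  | .seedV v q, _ => ⋃ u : URI, mjoin (evalQ W q {u}) {single v (.uri u)}
  | .qand q1 q2, S => mjoin (evalQ W q1 S) (evalQ W q2 S)
  | .qunion q1 q2, S => evalQ W q1 S ∪ evalQ W q2 S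
  | .proj V0 q, S => (restrictV V0) '' (evalQ W q S)

/-- The `uctx`-based evaluation `⟦l⟧_W^uctx` of a link path expression. -/
def evalL (W : Web) : LPE → URI → Set URI
  | .eps, u => if (W.adoc u).isSome then {u} else ∅
  | .pat lp, u =>
      {u' | ∃ d, W.adoc u = some d ∧ ∃ t d', W.edge d t u' d' ∧ lpMatch lp u t u'}
  | .seq l1 l2, u => {u'' | ∃ u', u' ∈ evalL W l1 u ∧ u'' ∈ evalL W l2 u'}
  | .alt l1 l2, u => evalL W l1 u ∪ evalL W l2 u
  | .star l, u =>
      {u' | (W.adoc u).isSome ∧ Relation.ReflTransGen (fun a b => b ∈ evalL W l a) u u'}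
  | .test l, u => {u' | u' = u ∧ evalL W l u ≠ ∅}
  | .sub v q, u =>
      {u' | (W.adoc u).isSome ∧ ∃ μ ∈ evalQ W q {u}, μ v = some (.uri u')}
end

/-- Semantic equivalence of LDQL queries. -/
def equivQ (q q' : LDQL) : Prop :=
  ∀ (W : Web) (S : Set URI), S.Finite → evalQ W q S = evalQ W q' S


/-! ### LPEs built only from ε, ⟨?v,q⟩ and (·)* -/

mutual
/-- All LPEs occurring in the query consist only of `ε`, `⟨?v,q⟩` and `(·)*`. -/
def LDQL.simple : LDQL → Prop
  | .base l _ => l.simple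
  | .seedU _ q => q.simple
  | .seedV _ q => q.simple
  | .qand q1 q2 => q1.simple ∧ q2.simple
  | .qunion q1 q2 => q1.simple ∧ q2.simple
  | .proj _ q => q.simple

/-- The LPE consists only of `ε`, `⟨?v,q⟩` and `(·)*`. -/
def LPE.simple : LPE → Prop
  | .eps => True
  | .pat _ => False
  | .seq _ _ => False
  | .alt _ _ => False
  | .star l => l.simple
  | .test _ => False
  | .sub _ q => q.simple
end

/-! ### Property paths under context-based semantics -/

/-- Property path expressions. -/
inductive PP where
  | uri (p : URI)
  | neg (us : List URI)
  | seq (r1 r2 : PP)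
  | alt (r1 r2 : PP)
  | star (r : PP)

/-- Terms allowed in PP-patterns: URIs, literals and variables. -/
inductive PPTerm where
  | uri (u : URI)
  | lit (l : LitId)
  | var (v : Var)

/-- The context selector `C_W`. -/
def CW (W : Web) (a : Obj) : Set RDFTriple :=
  {t | ∃ u d, a = .uri u ∧ W.adoc u = some d ∧ t ∈ W.data d ∧ t.s = .uri u}

/-- The RDF terms occurring in triples of documents of `W`. -/
def termsW (W : Web) : Set Obj :=
  {a | ∃ d ∈ W.docs, ∃ t ∈ W.data d, a = t.s.toObj ∨ a = .uri t.p ∨ a = t.o}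

/-- The binary relation on RDF terms induced by a PP expression under
context-based semantics. -/
def ppRel (W : Web) : PP → Obj → Obj → Prop
  | .uri p, a, b => ∃ s, objToSubj a = some s ∧ (⟨s, p, b⟩ : RDFTriple) ∈ CW W a
  | .neg us, a, b => ∃ p, p ∉ us ∧ ∃ s, objToSubj a = some s ∧ (⟨s, p, b⟩ : RDFTriple) ∈ CW W a
  | .seq r1 r2, a, b => ∃ m, ppRel W r1 a m ∧ ppRel W r2 m b
  | .alt r1 r2, a, b => ppRel W r1 a b ∨ ppRel W r2 a b
  | .star r, a, b => (a = b ∧ a ∈ termsW W) ∨ Relation.TransGen (ppRel W r) a b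

def PPTerm.toPval (μ : Mapping) : PPTerm → Option Obj
  | .uri u => some (.uri u)
  | .lit l => some (.lit l)
  | .var v => μ v

def ppVars (α β : PPTerm) : Set Var := {v | α = .var v ∨ β = .var v}

/-- The context-based evaluation `⟦(α,r,β)⟧_ctxt^W` of a PP-pattern. -/
def ctxtEvalPat (W : Web) (α : PPTerm) (r : PP) (β : PPTerm) : Set Mapping :=
  {μ | mdom μ = ppVars α β ∧
    ∃ a b, α.toPval μ = some a ∧ β.toPval μ = some b ∧ ppRel W r a b}

/-- PP-based SPARQL queries. -/
inductive PPQ where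
  | pat (α : PPTerm) (r : PP) (β : PPTerm)
  | and (R1 R2 : PPQ)
  | union (R1 R2 : PPQ)
  | opt (R1 R2 : PPQ)
  | filter (R : PPQ) (c : Cond)

/-- The context-based evaluation `⟦R⟧_ctxt^W` of a PP-based SPARQL query. -/
def evalPPQ (W : Web) : PPQ → Set Mapping
  | .pat α r β => ctxtEvalPat W α r β
  | .and R1 R2 => mjoin (evalPPQ W R1) (evalPPQ W R2)
  | .union R1 R2 => evalPPQ W R1 ∪ evalPPQ W R2
  | .opt R1 R2 =>
      mjoin (evalPPQ W R1) (evalPPQ W R2) ∪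
        {μ | μ ∈ evalPPQ W R1 ∧ ∀ μ2 ∈ evalPPQ W R2, ¬ compatible μ μ2}
  | .filter R c => {μ | μ ∈ evalPPQ W R ∧ condHolds μ c}

/-! ### NautiLOD -/

/-- NautiLOD expressions (without action rules). -/
inductive NLOD where
  | fwd (p : URI)
  | bwd (p : URI)
  | any
  | seq (n1 n2 : NLOD)
  | alt (n1 n2 : NLOD)
  | star (n : NLOD)
  | ask (n : NLOD) (P : GP)

/-- Dataset used for evaluating an ASK pattern over the data of a single document. -/
def askDS (W : Web) (d : Doc) : RDFDataset :=
  ⟨((W.data d : Finset RDFTriple) : Set RDFTriple), fun _ => none⟩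

/-- NautiLOD semantics `⟦n⟧_W^u`. -/
def nlEval (W : Web) : NLOD → URI → Set URI
  | .fwd p, u => {u' | ∃ d, W.adoc u = some d ∧ (⟨.uri u, p, .uri u'⟩ : RDFTriple) ∈ W.data d}
  | .bwd p, u => {u' | ∃ d, W.adoc u = some d ∧ (⟨.uri u', p, .uri u⟩ : RDFTriple) ∈ W.data d}
  | .any, u => {u' | ∃ d q, W.adoc u = some d ∧ (⟨.uri u, q, .uri u'⟩ : RDFTriple) ∈ W.data d}
  | .seq n1 n2, u =>
      {u'' | ∃ u', u' ∈ nlEval W n1 u ∧ (W.adoc u').isSome ∧ u'' ∈ nlEval W n2 u'}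
  | .alt n1 n2, u => nlEval W n1 u ∪ nlEval W n2 u
  | .star n, u =>
      {u' | Relation.ReflTransGen (fun a b => (W.adoc a).isSome ∧ b ∈ nlEval W n a) u u'}
  | .ask n P, u =>
      {u' | u' ∈ nlEval W n u ∧
        ∃ d, W.adoc u' = some d ∧ evalGP (askDS W d) P ((W.data d : Finset RDFTriple) : Set RDFTriple) ≠ ∅}

/-! ### Variables occurring in patterns and NautiLOD expressions -/

def condHasVar (v : Var) : Cond → Prop
  | .eq a b => a = .var v ∨ b = .var v
  | .neq a b => a = .var v ∨ b = .var v
  | .and c1 c2 => condHasVar v c1 ∨ condHasVar v c2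
  | .or c1 c2 => condHasVar v c1 ∨ condHasVar v c2
  | .not c => condHasVar v c

/-- The variable `v` occurs in the SPARQL graph pattern. -/
def gpHasVar (v : Var) : GP → Prop
  | .empty => False
  | .tp t => t.sj = .var v ∨ t.pr = .var v ∨ t.ob = .var v
  | .and g1 g2 => gpHasVar v g1 ∨ gpHasVar v g2
  | .union g1 g2 => gpHasVar v g1 ∨ gpHasVar v g2
  | .opt g1 g2 => gpHasVar v g1 ∨ gpHasVar v g2
  | .filter g c => gpHasVar v g ∨ condHasVar v c
  | .graphU _ g => gpHasVar v g
  | .graphV w g => v = w ∨ gpHasVar v g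
  | .bind g _ w => v = w ∨ gpHasVar v g

/-- The variable `v` occurs in the NautiLOD expression. -/
def nlodHasVar (v : Var) : NLOD → Prop
  | .fwd _ => False
  | .bwd _ => False
  | .any => False
  | .seq n1 n2 => nlodHasVar v n1 ∨ nlodHasVar v n2
  | .alt n1 n2 => nlodHasVar v n1 ∨ nlodHasVar v n2
  | .star n => nlodHasVar v n
  | .ask n P => nlodHasVar v n ∨ gpHasVar v P

/-! ### Reachability-based query semantics -/

/-- A reachability criterion. -/
def ReachCrit := RDFTriple → URI → GP → Prop

def cAll : ReachCrit := fun _ _ _ => True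

def cNone : ReachCrit := fun _ _ _ => False

/-- The list of triple patterns occurring in a SPARQL graph pattern. -/
def GP.tps : GP → List TriplePattern
  | .empty => []
  | .tp t => [t]
  | .and g1 g2 => g1.tps ++ g2.tps
  | .union g1 g2 => g1.tps ++ g2.tps
  | .opt g1 g2 => g1.tps ++ g2.tps
  | .filter g _ => g.tps
  | .graphU _ g => g.tps
  | .graphV _ g => g.tps
  | .bind g _ _ => g.tps

def cMatch : ReachCrit := fun t _ P => ∃ (μ : Mapping) (tp : TriplePattern),
  tp ∈ P.tps ∧ tpInst μ tp = some t

/-- `(c,S,P)`-reachability of a document in `W`. -/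
inductive Reachable (W : Web) (c : ReachCrit) (S : Set URI) (P : GP) : Doc → Prop where
  | seed (u : URI) (d : Doc) : u ∈ S → W.adoc u = some d → Reachable W c S P d
  | step (dsrc : Doc) (t : RDFTriple) (u : URI) (d : Doc) :
      Reachable W c S P dsrc → W.edge dsrc t u d → c t u P → Reachable W c S P d

/-- The RDF graph consisting of all triples of all `(c,S,P)`-reachable documents. -/
def reachGraph (W : Web) (c : ReachCrit) (S : Set URI) (P : GP) : Set RDFTriple :=
  {t | ∃ d, Reachable W c S P d ∧ t ∈ W.data d}

/-- The S-based evaluation of `P` over `W` under `c`-semantics. -/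
def reachEval (W : Web) (c : ReachCrit) (S : Set URI) (P : GP) : Set Mapping :=
  evalGP ⟨reachGraph W c S P, fun _ => none⟩ P (reachGraph W c S P)

/-! ### Constructions used in Theorems on c_Match and NautiLOD -/

def addFilter (v : Var) (pt : PTerm) (g : GP) : GP :=
  match pt with
  | .var _ => g
  | .term o => .filter g (.eq (.var v) (.term o))

/-- The basic LDQL query `q_k = ⟨ε,P_k⟩` associated with a triple pattern. -/
def matchQ (vs vp vo : Var) (t : TriplePattern) : LDQL :=
  .base .eps (addFilter vo t.ob (addFilter vp t.pr (addFilter vs t.sj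
    (.tp ⟨.var vs, .var vp, .var vo⟩))))

/-- An LPE whose evaluation is empty everywhere. -/
def emptyLPE (v : Var) : LPE := .sub v (.base .eps .empty)

/-- The LPE `l_Match` associated with a SPARQL graph pattern. -/
def lMatch (vs vp vo : Var) (P : GP) : LPE :=
  .star ((P.tps.map (fun t =>
      LPE.alt (.sub vs (matchQ vs vp vo t))
        (LPE.alt (.sub vp (matchQ vs vp vo t)) (.sub vo (matchQ vs vp vo t))))).foldr
    LPE.alt (emptyLPE vs))

/-- The translation `trans_N` from NautiLOD expressions to LPEs, using the
(fresh, pairwise distinct) variables `vx`, `vu`, `vp`. -/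
def transN (vx vu vp : Var) : NLOD → LPE
  | .fwd p => .pat ⟨.plus, .uri p, .star⟩
  | .bwd p => .pat ⟨.star, .uri p, .plus⟩
  | .any => .sub vx (.base .eps (.graphV vu (.tp ⟨.var vu, .var vp, .var vx⟩)))
  | .seq n1 n2 => .seq (transN vx vu vp n1) (transN vx vu vp n2)
  | .alt n1 n2 => .alt (transN vx vu vp n1) (transN vx vu vp n2)
  | .star n => .star (transN vx vu vp n)
  | .ask n P => .seq (transN vx vu vp n) (.test (.sub vx (.base .eps (.graphV vx P))))


/-- `(SEED ?v (q1 UNION q2)) ≡ ((SEED ?v q1) UNION (SEED ?v q2))`. -/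
theorem seedV_union_distrib_LDQL (q1 q2 : LDQL) (v : Var) :
    ∀ (W : Web) (S : Set URI), S.Finite →
      evalQ W (.seedV v (.qunion q1 q2)) S
        = evalQ W (.qunion (.seedV v q1) (.seedV v q2)) S := by
  intro W S _
  show (⋃ u : URI, mjoin (evalQ W q1 {u} ∪ evalQ W q2 {u}) {single v (.uri u)})
      = (⋃ u : URI, mjoin (evalQ W q1 {u}) {single v (.uri u)}) ∪
        (⋃ u : URI, mjoin (evalQ W q2 {u}) {single v (.uri u)})
  rw [← Set.iUnion_union_distrib]
  refine Set.iUnion_congr fun u => ?_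
  ext μ
  constructor
  · rintro ⟨μ1, h1 | h1, μ2, h2, hc, he⟩
    · exact Or.inl ⟨μ1, h1, μ2, h2, hc, he⟩
    · exact Or.inr ⟨μ1, h1, μ2, h2, hc, he⟩
  · rintro (⟨μ1, h1, μ2, h2, hc, he⟩ | ⟨μ1, h1, μ2, h2, hc, he⟩)
    · exact ⟨μ1, Or.inl h1, μ2, h2, hc, he⟩
    · exact ⟨μ1, Or.inr h1, μ2, h2, hc, he⟩

end

end LDQLFormal
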